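/- Let n, k, l, p, q_L, q_M ∈ ℕ and E, A ∈ ℝ^{l×n}, C ∈ ℝ^{p×n}, B_L ∈ ℝ^{l×q_L}, B_M ∈ ℝ^{l×q_M}, B = [B_L,B_M], L₁ ∈ ℝ^{l×k}, L₂ ∈ ℝ^{p×k}, F ∈ ℝ^{j×n}, J ∈ ℝ^{q_M×n}, Θ ∈ ℝ^{q_M×q_M}, μ ∈ ℝ, δ > 0, 𝒫 ∈ ℝ^{(l+p)×(n+k)}, 𝒦 ∈ ℝ^{(n+k)×(n+k)}. Assume 𝒫ᵀℰ = ℰᵀ𝒫 and 𝒫ᵀ[[0,L₁],[0,L₂]] = 𝒦H. Let I be an interval, η ∈ C¹(I → ℝ^{n+k}), φ = (φ_L, φ_M) ∈ C(I → ℝ^{q_L}×ℝ^{q_M}) with ℰ η̇(t) = 𝒜 η(t) + ℬ φ(t) for all t ∈ I, and suppose that for all t ∈ I: δ(η(t)ᵀ ℱᵀℱ η(t) − φ_L(t)ᵀφ_L(t)) ≥ 0 and ([J,0]η(t))ᵀ Θ φ_M(t) + φ_M(t)ᵀ Θᵀ [J,0]η(t) − μ‖[J,0]η(t)‖² ≥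 0. Then for all t ∈ I, (d/dt)(η(t)ᵀ ℰᵀ𝒫 η(t)) ≤ (η(t), φ(t))ᵀ 𝒬 (η(t), φ(t)). -/

import Mathlib

open Matrix Set Filter

/-- Euclidean norm of a vector in `ℝ^ι`. -/
noncomputable def enorm {ι : Type*} [Fintype ι] (x : ι → ℝ) : ℝ :=
  Real.sqrt (x ⬝ᵥ x)

/-- Spectral (Euclidean operator) norm of a real matrix. -/
noncomputable def matNorm {ι κ : Type*} [Fintype ι] [Fintype κ] [DecidableEq κ]
    (M : Matrix ι κ ℝ) : ℝ :=
  ‖LinearMap.toContinuousLinearMap (Matrix.toEuclideanLin M)‖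

/-- Largest eigenvalue of a (symmetric) real matrix, as the supremum of its eigenvalues. -/
noncomputable def lamMax {q : Type*} [Fintype q] (M : Matrix q q ℝ) : ℝ :=
  sSup {r : ℝ | ∃ v : q → ℝ, v ≠ 0 ∧ M *ᵥ v = r • v}

/-- The first Wong sequence `V^i` of the matrix pencil `sE - A`. -/
def wongV {L N : Type*} [Fintype N] (E A : Matrix L N ℝ) : ℕ → Set (N → ℝ)
  | 0 => Set.univ
  | i + 1 => {x | A *ᵥ x ∈ (fun v => E *ᵥ v) '' wongV E A i}

/-- The first Wong limit `V* = ⋂ V^i` of the matrix pencil `sE - A`. -/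
def wongVstar {L N : Type*} [Fintype N] (E A : Matrix L N ℝ) : Set (N → ℝ) :=
  ⋂ i, wongV E A i

/-- The second Wong sequence `W^i` of the matrix pencil `sE - A`. -/
def wongW {L N : Type*} [Fintype N] (E A : Matrix L N ℝ) : ℕ → Set (N → ℝ)
  | 0 => {0}
  | i + 1 => {x | E *ᵥ x ∈ (fun v => A *ᵥ v) '' wongW E A i}

/-- The second Wong limit `W* = ⋃ W^i` of the matrix pencil `sE - A`. -/
def wongWstar {L N : Type*} [Fintype N] (E A : Matrix L N ℝ) : Set (N → ℝ) :=
  ⋃ i, wongW E A i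

/-- `M <_V 0` : the quadratic form of `M` is negative on `V \ {0}`. -/
def NegDefOn {ι : Type*} [Fintype ι] (M : Matrix ι ι ℝ) (V : Set (ι → ℝ)) : Prop :=
  ∀ v ∈ V, v ≠ 0 → v ⬝ᵥ (M *ᵥ v) < 0

/-- `M >_V 0` : the quadratic form of `M` is positive on `V \ {0}`. -/
def PosDefOn {ι : Type*} [Fintype ι] (M : Matrix ι ι ℝ) (V : Set (ι → ℝ)) : Prop :=
  ∀ v ∈ V, v ≠ 0 → 0 < v ⬝ᵥ (M *ᵥ v)

/-- `M ≥_V 0` : the quadratic form of `M` is nonnegative on `V`. -/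
def PosSemidefOn {ι : Type*} [Fintype ι] (M : Matrix ι ι ℝ) (V : Set (ι → ℝ)) : Prop :=
  ∀ v ∈ V, 0 ≤ v ⬝ᵥ (M *ᵥ v)

/-!
Since `𝒫ᵀℰ` is symmetric, the derivative of `ηᵀℰᵀ𝒫η` along a trajectory is
`2 (𝒫η)ᵀ ℰη̇ = 2 (𝒫η)ᵀ (𝒜η + ℬφ)`. Splitting `𝒜 = Â + [[0,L₁],[0,L₂]]` and using
`𝒫ᵀ[[0,L₁],[0,L₂]] = 𝒦H`, the quadratic form of `𝒬` is exactly this derivative plus the two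
nonnegative quantities of the Lipschitz and monotonicity conditions (an S-procedure).
-/

section Calculus

variable {𝕜 ι κ : Type*} [NontriviallyNormedField 𝕜] [Fintype ι] {f g : 𝕜 → ι → 𝕜}
  {f' g' : ι → 𝕜} {s : Set 𝕜} {t : 𝕜}

theorem HasDerivWithinAt.dotProduct (hf : HasDerivWithinAt f f' s t)
    (hg : HasDerivWithinAt g g' s t) :
    HasDerivWithinAt (fun u => f u ⬝ᵥ g u) (f' ⬝ᵥ g t + f t ⬝ᵥ g') s t := by
  have hf := hasDerivWithinAt_pi.1 hf
  have hg := hasDerivWithinAt_pi.1 hg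
  simpa only [_root_.dotProduct, ← Finset.sum_add_distrib] using
    HasDerivWithinAt.fun_sum (u := Finset.univ) fun i _ => (hf i).fun_mul (hg i)

theorem HasDerivWithinAt.matrix_mulVec (M : Matrix κ ι 𝕜) (hf : HasDerivWithinAt f f' s t) :
    HasDerivWithinAt (fun u => M *ᵥ f u) (M *ᵥ f') s t :=
  hasDerivWithinAt_pi.2 fun i => by
    simpa [mulVec] using (hasDerivWithinAt_const t s (M i)).dotProduct hf

end Calculus

section QuadraticForms

variable {R l m n : Type*} [CommSemiring R] [Fintype l] [Fintype m] [Fintype n]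

theorem dotProduct_transpose_mul_mulVec (A : Matrix l m R) (B : Matrix l n R) (x : m → R)
    (y : n → R) : x ⬝ᵥ ((Aᵀ * B) *ᵥ y) = (A *ᵥ x) ⬝ᵥ (B *ᵥ y) := by
  rw [← mulVec_mulVec, dotProduct_transpose_mulVec, dotProduct_comm]

theorem dotProduct_transpose_mul_mulVec_add_of_transpose_mul_comm {P E : Matrix l m R}
    (h : Pᵀ * E = Eᵀ * P) (x v : m → R) :
    v ⬝ᵥ ((Eᵀ * P) *ᵥ x) + x ⬝ᵥ ((Eᵀ * P) *ᵥ v) = 2 * ((P *ᵥ x) ⬝ᵥ (E *ᵥ v)) := by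
  rw [dotProduct_transpose_mul_mulVec, ← h, dotProduct_transpose_mul_mulVec, dotProduct_comm,
    two_mul]

theorem sumElim_dotProduct_fromBlocks_transpose_mulVec (A : Matrix m m R) (B : Matrix m n R)
    (D : Matrix n n R) (x : m → R) (y : n → R) :
    Sum.elim x y ⬝ᵥ (fromBlocks A B Bᵀ D *ᵥ Sum.elim x y)
      = x ⬝ᵥ (A *ᵥ x) + 2 * (x ⬝ᵥ (B *ᵥ y)) + y ⬝ᵥ (D *ᵥ y) := by
  rw [fromBlocks_mulVec, Sum.elim_comp_inl, Sum.elim_comp_inr, sumElim_dotProduct_sumElim,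
    dotProduct_add, dotProduct_add, dotProduct_transpose_mulVec]
  ring

theorem sumElim_dotProduct_fromBlocks_lyapunov_mulVec {P A L : Matrix l m R} {K H : Matrix m m R} (hKH : Pᵀ * L = K * H)
    (S : Matrix m m R) (B : Matrix l n R) (T : Matrix m n R) (D : Matrix n n R) (x : m → R)
    (y : n → R) :
    Sum.elim x y ⬝ᵥ (fromBlocks (Aᵀ * P + Pᵀ * A + Hᵀ * Kᵀ + K * H + S) (Pᵀ * B + T)
        (Bᵀ * P + Tᵀ) D *ᵥ Sum.elim x y)
      = 2 * ((P *ᵥ x) ⬝ᵥ ((A + L) *ᵥ x + B *ᵥ y)) + x ⬝ᵥ (S *ᵥ x) + 2 * (x ⬝ᵥ (T *ᵥ y))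
        + y ⬝ᵥ (D *ᵥ y) := by
  have hsymm : Aᵀ * P + Pᵀ * A + Hᵀ * Kᵀ + K * H = (Pᵀ * (A + L))ᵀ + Pᵀ * (A + L) := by
    rw [Matrix.mul_add, hKH, transpose_add, transpose_mul, transpose_mul, transpose_transpose]
    abel
  have hoff : Bᵀ * P + Tᵀ = (Pᵀ * B + T)ᵀ := by
    rw [transpose_add, transpose_mul, transpose_transpose]
  rw [hsymm, hoff, sumElim_dotProduct_fromBlocks_transpose_mulVec]
  simp only [add_mulVec, dotProduct_add, dotProduct_transpose_mulVec (Pᵀ * (A + L)),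
    dotProduct_transpose_mul_mulVec]
  ring

end QuadraticForms

theorem lyapunov_derivative_le_Q_form_general {n k l p qL qM j : ℕ}
    (A : Matrix (Fin l) (Fin n) ℝ) (C : Matrix (Fin p) (Fin n) ℝ)
    (L₁ : Matrix (Fin l) (Fin k) ℝ) (L₂ : Matrix (Fin p) (Fin k) ℝ)
    (J : Matrix (Fin qM) (Fin n) ℝ)
    (Θ : Matrix (Fin qM) (Fin qM) ℝ) (μ δ : ℝ)
    (P : Matrix (Fin l ⊕ Fin p) (Fin n ⊕ Fin k) ℝ)
    (K : Matrix (Fin n ⊕ Fin k) (Fin n ⊕ Fin k) ℝ)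
    -- the block matrices
    (calE : Matrix (Fin l ⊕ Fin p) (Fin n ⊕ Fin k) ℝ)
    (calA : Matrix (Fin l ⊕ Fin p) (Fin n ⊕ Fin k) ℝ)
    (hcalA : calA = Matrix.fromBlocks A L₁ C L₂)
    (calB : Matrix (Fin l ⊕ Fin p) (Fin qL ⊕ Fin qM) ℝ)
    (hatA : Matrix (Fin l ⊕ Fin p) (Fin n ⊕ Fin k) ℝ)
    (hhatA : hatA = Matrix.fromBlocks A 0 C 0)
    (H : Matrix (Fin n ⊕ Fin k) (Fin n ⊕ Fin k) ℝ)
    (calF : Matrix (Fin j) (Fin n ⊕ Fin k) ℝ)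
    (hatTheta : Matrix (Fin n ⊕ Fin k) (Fin qL ⊕ Fin qM) ℝ)
    (hhatTheta : hatTheta = Matrix.fromBlocks 0 (Jᵀ * Θ) 0 0)
    (calJ : Matrix (Fin n ⊕ Fin k) (Fin n ⊕ Fin k) ℝ)
    (hcalJ : calJ = Matrix.fromBlocks (Jᵀ * J) 0 0 0)
    (Lam : Matrix (Fin qL ⊕ Fin qM) (Fin qL ⊕ Fin qM) ℝ)
    (hLam : Lam = Matrix.fromBlocks (1 : Matrix (Fin qL) (Fin qL) ℝ) 0 0 0)
    (Q : Matrix ((Fin n ⊕ Fin k) ⊕ (Fin qL ⊕ Fin qM)) ((Fin n ⊕ Fin k) ⊕ (Fin qL ⊕ Fin qM)) ℝ)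
    (hQ : Q = Matrix.fromBlocks
      (hatAᵀ * P + Pᵀ * hatA + Hᵀ * Kᵀ + K * H + δ • (calFᵀ * calF) - μ • calJ)
      (Pᵀ * calB + hatTheta)
      (calBᵀ * P + hatThetaᵀ)
      (-(δ • Lam)))
    -- structural assumptions on 𝒫 and 𝒦
    (hsym : Pᵀ * calE = calEᵀ * P)
    (hKH : Pᵀ * Matrix.fromBlocks (0 : Matrix (Fin l) (Fin n) ℝ) L₁ 0 L₂ = K * H)
    -- the trajectory
    (I : Set ℝ)
    (η η' : ℝ → (Fin n ⊕ Fin k) → ℝ)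
    (φL : ℝ → Fin qL → ℝ) (φM : ℝ → Fin qM → ℝ)
    (hη : ∀ t ∈ I, HasDerivWithinAt η (η' t) I t)
    (hDAE : ∀ t ∈ I, calE *ᵥ η' t = calA *ᵥ η t + calB *ᵥ Sum.elim (φL t) (φM t))
    -- consequences of the Lipschitz and monotonicity conditions
    (hLipQ : ∀ t ∈ I, 0 ≤ δ * (η t ⬝ᵥ ((calFᵀ * calF) *ᵥ η t) - φL t ⬝ᵥ φL t))
    (hMonQ : ∀ t ∈ I,
      0 ≤ (Matrix.fromCols J (0 : Matrix (Fin qM) (Fin k) ℝ) *ᵥ η t) ⬝ᵥ (Θ *ᵥ φM t)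
        + φM t ⬝ᵥ (Θᵀ *ᵥ (Matrix.fromCols J (0 : Matrix (Fin qM) (Fin k) ℝ) *ᵥ η t))
        - μ * ((Matrix.fromCols J (0 : Matrix (Fin qM) (Fin k) ℝ) *ᵥ η t) ⬝ᵥ
            (Matrix.fromCols J (0 : Matrix (Fin qM) (Fin k) ℝ) *ᵥ η t))) :
    ∀ t ∈ I, ∃ dV : ℝ,
      HasDerivWithinAt (fun s => η s ⬝ᵥ ((calEᵀ * P) *ᵥ η s)) dV I t ∧
      dV ≤ Sum.elim (η t) (Sum.elim (φL t) (φM t)) ⬝ᵥ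
        (Q *ᵥ Sum.elim (η t) (Sum.elim (φL t) (φM t))) := by
  intro t ht
  refine ⟨_, (hη t ht).dotProduct ((hη t ht).matrix_mulVec (calEᵀ * P)), ?_⟩
  set G := Matrix.fromCols J (0 : Matrix (Fin qM) (Fin k) ℝ)
  have hsplit : hatA + fromBlocks 0 L₁ 0 L₂ = calA := by
    rw [hcalA, hhatA, fromBlocks_add]; simp
  have hJ : η t ⬝ᵥ (calJ *ᵥ η t) = (G *ᵥ η t) ⬝ᵥ (G *ᵥ η t) := by
    rw [← dotProduct_transpose_mul_mulVec, hcalJ, transpose_fromCols, fromRows_mul_fromCols]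
    simp
  have hΘ : η t ⬝ᵥ (hatTheta *ᵥ Sum.elim (φL t) (φM t)) = (G *ᵥ η t) ⬝ᵥ (Θ *ᵥ φM t) := by
    have hfac : hatTheta = Gᵀ * fromCols 0 Θ := by
      rw [hhatTheta, transpose_fromCols, fromRows_mul_fromCols]; simp
    rw [hfac, dotProduct_transpose_mul_mulVec]
    simp
  have hΛ : Sum.elim (φL t) (φM t) ⬝ᵥ (Lam *ᵥ Sum.elim (φL t) (φM t)) = φL t ⬝ᵥ φL t := by
    simp [hLam, fromBlocks_mulVec, sumElim_dotProduct_sumElim]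
  have hMon := hMonQ t ht
  rw [dotProduct_transpose_mulVec] at hMon
  rw [dotProduct_transpose_mul_mulVec_add_of_transpose_mul_comm hsym, hDAE t ht, hQ,
    add_sub_assoc, sumElim_dotProduct_fromBlocks_lyapunov_mulVec hKH, hsplit]
  simp only [sub_mulVec, neg_mulVec, smul_mulVec, dotProduct_sub, dotProduct_neg,
    dotProduct_smul, smul_eq_mul, hJ, hΘ, hΛ]
  linarith [hLipQ t ht]

/-- Along any trajectory of the error system `ℰη̇ = 𝒜η + ℬφ` satisfying the quadratic
consequences of the Lipschitz and monotonicity conditions, the Lyapunov function candidate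
`Ṽ(η) = ηᵀℰᵀ𝒫η` satisfies `(d/dt)Ṽ(η(t)) ≤ (η(t),φ(t))ᵀ𝒬(η(t),φ(t))`. -/
theorem lyapunov_derivative_le_Q_form {n k l p qL qM j : ℕ}
    (E A : Matrix (Fin l) (Fin n) ℝ) (C : Matrix (Fin p) (Fin n) ℝ)
    (BL : Matrix (Fin l) (Fin qL) ℝ) (BM : Matrix (Fin l) (Fin qM) ℝ)
    (L₁ : Matrix (Fin l) (Fin k) ℝ) (L₂ : Matrix (Fin p) (Fin k) ℝ)
    (F : Matrix (Fin j) (Fin n) ℝ) (J : Matrix (Fin qM) (Fin n) ℝ)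
    (Θ : Matrix (Fin qM) (Fin qM) ℝ) (μ δ : ℝ) (hδ : 0 < δ)
    (P : Matrix (Fin l ⊕ Fin p) (Fin n ⊕ Fin k) ℝ)
    (K : Matrix (Fin n ⊕ Fin k) (Fin n ⊕ Fin k) ℝ)
    -- the block matrices
    (calE : Matrix (Fin l ⊕ Fin p) (Fin n ⊕ Fin k) ℝ)
    (hcalE : calE = Matrix.fromBlocks E 0 0 0)
    (calA : Matrix (Fin l ⊕ Fin p) (Fin n ⊕ Fin k) ℝ)
    (hcalA : calA = Matrix.fromBlocks A L₁ C L₂)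
    (calB : Matrix (Fin l ⊕ Fin p) (Fin qL ⊕ Fin qM) ℝ)
    (hcalB : calB = Matrix.fromRows (Matrix.fromCols BL BM) 0)
    (hatA : Matrix (Fin l ⊕ Fin p) (Fin n ⊕ Fin k) ℝ)
    (hhatA : hatA = Matrix.fromBlocks A 0 C 0)
    (H : Matrix (Fin n ⊕ Fin k) (Fin n ⊕ Fin k) ℝ)
    (hH : H = Matrix.fromBlocks 0 0 0 (1 : Matrix (Fin k) (Fin k) ℝ))
    (calF : Matrix (Fin j) (Fin n ⊕ Fin k) ℝ)
    (hcalF : calF = Matrix.fromCols F 0)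
    (hatTheta : Matrix (Fin n ⊕ Fin k) (Fin qL ⊕ Fin qM) ℝ)
    (hhatTheta : hatTheta = Matrix.fromBlocks 0 (Jᵀ * Θ) 0 0)
    (calJ : Matrix (Fin n ⊕ Fin k) (Fin n ⊕ Fin k) ℝ)
    (hcalJ : calJ = Matrix.fromBlocks (Jᵀ * J) 0 0 0)
    (Lam : Matrix (Fin qL ⊕ Fin qM) (Fin qL ⊕ Fin qM) ℝ)
    (hLam : Lam = Matrix.fromBlocks (1 : Matrix (Fin qL) (Fin qL) ℝ) 0 0 0)
    (Q : Matrix ((Fin n ⊕ Fin k) ⊕ (Fin qL ⊕ Fin qM)) ((Fin n ⊕ Fin k) ⊕ (Fin qL ⊕ Fin qM)) ℝ)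
    (hQ : Q = Matrix.fromBlocks
      (hatAᵀ * P + Pᵀ * hatA + Hᵀ * Kᵀ + K * H + δ • (calFᵀ * calF) - μ • calJ)
      (Pᵀ * calB + hatTheta)
      (calBᵀ * P + hatThetaᵀ)
      (-(δ • Lam)))
    -- structural assumptions on 𝒫 and 𝒦
    (hsym : Pᵀ * calE = calEᵀ * P)
    (hKH : Pᵀ * Matrix.fromBlocks (0 : Matrix (Fin l) (Fin n) ℝ) L₁ 0 L₂ = K * H)
    -- the trajectory
    (I : Set ℝ) (hI : I.OrdConnected)
    (η η' : ℝ → (Fin n ⊕ Fin k) → ℝ)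
    (φL : ℝ → Fin qL → ℝ) (φM : ℝ → Fin qM → ℝ)
    (hη : ∀ t ∈ I, HasDerivWithinAt η (η' t) I t)
    (hη' : ContinuousOn η' I) (hφL : ContinuousOn φL I) (hφM : ContinuousOn φM I)
    (hDAE : ∀ t ∈ I, calE *ᵥ η' t = calA *ᵥ η t + calB *ᵥ Sum.elim (φL t) (φM t))
    -- consequences of the Lipschitz and monotonicity conditions
    (hLipQ : ∀ t ∈ I, 0 ≤ δ * (η t ⬝ᵥ ((calFᵀ * calF) *ᵥ η t) - φL t ⬝ᵥ φL t))
    (hMonQ : ∀ t ∈ I,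
      0 ≤ (Matrix.fromCols J (0 : Matrix (Fin qM) (Fin k) ℝ) *ᵥ η t) ⬝ᵥ (Θ *ᵥ φM t)
        + φM t ⬝ᵥ (Θᵀ *ᵥ (Matrix.fromCols J (0 : Matrix (Fin qM) (Fin k) ℝ) *ᵥ η t))
        - μ * ((Matrix.fromCols J (0 : Matrix (Fin qM) (Fin k) ℝ) *ᵥ η t) ⬝ᵥ
            (Matrix.fromCols J (0 : Matrix (Fin qM) (Fin k) ℝ) *ᵥ η t))) :
    ∀ t ∈ I, ∃ dV : ℝ,
      HasDerivWithinAt (fun s => η s ⬝ᵥ ((calEᵀ * P) *ᵥ η s)) dV I t ∧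
      dV ≤ Sum.elim (η t) (Sum.elim (φL t) (φM t)) ⬝ᵥ
        (Q *ᵥ Sum.elim (η t) (Sum.elim (φL t) (φM t))) :=
  lyapunov_derivative_le_Q_form_general A C L₁ L₂ J Θ μ δ P K calE calA hcalA calB hatA hhatA H calF
    hatTheta hhatTheta calJ hcalJ Lam hLam Q hQ hsym hKH I η η' φL φM hη hDAE hLipQ hMonQ
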